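/- arXiv:2004.07298 — 2 statements merged into one kernel-verified Lean document; each statement's English description precedes it below -/
import Mathlib

section
/- Assume μ(τ) ≠ 0 and that there are constants C₀ > 0 and δ₁ > 0 with μ(‖τ_N/N − μ(τ)‖ ≥ ‖μ(τ)‖/2) ≤ C₀ N^{−δ₁} for all N ≥ 1. Let A₁, A₂ : X → ℝ and B₁, B₂ : Y → ℝ be bounded measurable functions such that for some constants C_f, δ₂, C_G, δ₃ > 0: |μ(A₁ · (A₂ ∘ f^N)) − μ(A₁)μ(A₂)| ≤ C_f N^{−δ₂} for all N ≥ 1, and |ν(B₁ · (B₂ ∘ G_t)) − ν(B₁)ν(B₂)| ≤ C_G ‖t‖^{−δ₃} for all t ∈ ℝ^d, t ≠ 0. Then, with Φ_i(x, y) = A_i(x)B_i(y), there exists C' such that |∫ Φ₁ · (Φ₂ ∘ F^N) dζ − (∫ Φ₁ dζ)(∫ Φ₂ dζ)| ≤ C' N^{−min(δ₁, δ₂, δ₃)} for all N ≥ 1. -/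
/-! By Fubini, the correlation of `Φ₁` and `Φ₂ ∘ F^N` is `∫ A₁ (A₂ ∘ f^N) ρ(τ_N) dμ`, where
`ρ(t) = ν(B₁ (B₂ ∘ G_t))` is the correlation function of the flow. Replacing `ρ(τ_N)` by
`ν(B₁) ν(B₂)` leaves the correlation of `A₁, A₂` under `f`, of order `N^{-δ₂}`. Wherever
`τ_N / N` is within `‖μ(τ)‖ / 2` of `μ(τ)`, we have `‖τ_N‖ > N ‖μ(τ)‖ / 2`, so the replacement
costs `O(N^{-δ₃})` by mixing of `G`; on the remaining set, of measure `O(N^{-δ₁})`, the integrand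
is merely bounded. -/

open MeasureTheory Filter Topology

/-- Birkhoff sums `τ_N(x) = ∑_{n<N} τ(f^n x)` of an `ℝ^d`-valued observable. -/
noncomputable def birkhoff {X : Type*} {d : ℕ} (f : X → X)
    (τ : X → EuclideanSpace ℝ (Fin d)) (N : ℕ) (x : X) : EuclideanSpace ℝ (Fin d) :=
  ∑ n ∈ Finset.range N, τ (f^[n] x)

/-- The generalized `T,T⁻¹` (skew product) map `F(x,y) = (f x, G_{τ(x)} y)`. -/
def skew {X Y : Type*} {d : ℕ} (f : X → X) (G : EuclideanSpace ℝ (Fin d) → Y → Y)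
    (τ : X → EuclideanSpace ℝ (Fin d)) : X × Y → X × Y :=
  fun q => (f q.1, G (τ q.1) q.2)

lemma exists_nonneg_abs_le {α : Type*} {g : α → ℝ} (h : ∃ M, ∀ x, |g x| ≤ M) :
    ∃ M, 0 ≤ M ∧ ∀ x, |g x| ≤ M :=
  let ⟨M, hM⟩ := h
  ⟨max M 0, le_max_right _ _, fun x => (hM x).trans (le_max_left _ _)⟩

lemma abs_mul_le_of_abs_le {x y a b : ℝ} (hx : |x| ≤ a) (hy : |y| ≤ b) : |x * y| ≤ a * b := by
  rw [abs_mul]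
  exact mul_le_mul hx hy (abs_nonneg _) ((abs_nonneg _).trans hx)

section Integrals

variable {α : Type*} [MeasurableSpace α] {μ : Measure α} [IsProbabilityMeasure μ]

lemma abs_integral_le_of_abs_le {g : α → ℝ} {M : ℝ} (h : ∀ x, |g x| ≤ M) :
    |∫ x, g x ∂μ| ≤ M := by
  simpa using norm_integral_le_of_norm_le_const (μ := μ) (f := g) (ae_of_all _ h)

lemma abs_integral_le_of_abs_le_of_notMem {g : α → ℝ} {S : Set α} (hS : MeasurableSet S)
    {M ε : ℝ} (hε : 0 ≤ ε) (hM : ∀ x, |g x| ≤ M) (hε' : ∀ x ∉ S, |g x| ≤ ε) :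
    |∫ x, g x ∂μ| ≤ M * μ.real S + ε := by
  have hint : Integrable (S.indicator fun _ => M : α → ℝ) μ := (integrable_const M).indicator hS
  calc |∫ x, g x ∂μ| ≤ ∫ x, S.indicator (fun _ => M) x + ε ∂μ := by
        refine norm_integral_le_of_norm_le (f := g) (hint.add (integrable_const ε))
          (ae_of_all _ fun x => ?_)
        by_cases hx : x ∈ S
        · simpa [hx] using (hM x).trans (le_add_of_nonneg_right hε)
        · simpa [hx] using hε' x hx
    _ = M * μ.real S + ε := by
        rw [integral_add hint (integrable_const ε), integral_indicator_const _ hS]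
        simp [mul_comm]

end Integrals

lemma mul_half_norm_lt_norm_of_norm_inv_smul_sub_lt {E : Type*} [NormedAddCommGroup E]
    [NormedSpace ℝ E] {N : ℝ} (hN : 0 < N) {v m : E} (h : ‖N⁻¹ • v - m‖ < ‖m‖ / 2) :
    N * (‖m‖ / 2) < ‖v‖ := by
  have hm : ‖m‖ ≤ N⁻¹ * ‖v‖ + ‖N⁻¹ • v - m‖ := by
    have := norm_le_norm_add_norm_sub' m (N⁻¹ • v)
    rwa [norm_sub_rev, norm_smul, Real.norm_of_nonneg (inv_nonneg.2 hN.le)] at this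
  have : ‖m‖ / 2 < N⁻¹ * ‖v‖ := by linarith
  rwa [lt_inv_mul_iff₀ hN] at this

lemma abs_le_rpow_of_le_norm {E : Type*} [NormedAddCommGroup E] {φ : E → ℝ} {C δ r : ℝ}
    (hC : 0 ≤ C) (hδ : 0 ≤ δ) (hφ : ∀ t ≠ 0, |φ t| ≤ C * ‖t‖ ^ (-δ)) (hr : 0 < r) {t : E}
    (ht : r ≤ ‖t‖) : |φ t| ≤ C * r ^ (-δ) :=
  calc |φ t| ≤ C * ‖t‖ ^ (-δ) := hφ t (norm_pos_iff.mp (hr.trans_le ht))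
    _ ≤ C * r ^ (-δ) :=
      mul_le_mul_of_nonneg_left (Real.rpow_le_rpow_of_nonpos hr ht (neg_nonpos.2 hδ)) hC

lemma abs_integral_mul_comp_le_of_large_deviation {X E : Type*} [MeasurableSpace X]
    [NormedAddCommGroup E] [NormedSpace ℝ E] {μ : Measure X} [IsProbabilityMeasure μ]
    {g : X → ℝ} {T : X → E} {φ : E → ℝ} {m : E} {N a β C δ : ℝ} (hN : 0 < N)
    (hS : MeasurableSet {x | ‖m‖ / 2 ≤ ‖N⁻¹ • T x - m‖}) (hg : ∀ x, |g x| ≤ a)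
    (hφ : ∀ t, |φ t| ≤ β) (hC : 0 ≤ C) (hδ : 0 ≤ δ)
    (hφdecay : ∀ t ≠ 0, |φ t| ≤ C * ‖t‖ ^ (-δ)) :
    |∫ x, g x * φ (T x) ∂μ|
      ≤ a * (β * μ.real {x | ‖m‖ / 2 ≤ ‖N⁻¹ • T x - m‖} + C * (N * (‖m‖ / 2)) ^ (-δ)) := by
  have ha : 0 ≤ a := by
    obtain ⟨x₀⟩ := nonempty_of_isProbabilityMeasure μ
    exact (abs_nonneg _).trans (hg x₀)
  rw [mul_add, ← mul_assoc]
  refine abs_integral_le_of_abs_le_of_notMem hS (by positivity)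
    (fun x => abs_mul_le_of_abs_le (hg x) (hφ _)) fun x hx => ?_
  have hx : ‖N⁻¹ • T x - m‖ < ‖m‖ / 2 := not_le.mp hx
  have hr : 0 < N * (‖m‖ / 2) := mul_pos hN (by linarith [norm_nonneg (N⁻¹ • T x - m)])
  exact abs_mul_le_of_abs_le (hg x) (abs_le_rpow_of_le_norm hC hδ hφdecay hr
    (mul_half_norm_lt_norm_of_norm_inv_smul_sub_lt hN hx).le)

noncomputable def flowCorrelation {E Y : Type*} [MeasurableSpace Y] (ν : Measure Y) (G : E → Y → Y)
    (B₁ B₂ : Y → ℝ) (t : E) : ℝ :=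
  ∫ y, B₁ y * B₂ (G t y) ∂ν

section SkewProduct

variable {X Y : Type*} {d : ℕ} {f : X → X} {G : EuclideanSpace ℝ (Fin d) → Y → Y}
  {τ : X → EuclideanSpace ℝ (Fin d)}

lemma skew_iterate_apply (hG0 : G 0 = id) (hGadd : ∀ t s, G (t + s) = G t ∘ G s) (N : ℕ)
    (q : X × Y) : (skew f G τ)^[N] q = (f^[N] q.1, G (birkhoff f τ N q.1) q.2) := by
  induction N with
  | zero => simp [birkhoff, hG0]
  | succ n ih =>
    rw [Function.iterate_succ_apply', ih, Function.iterate_succ_apply', birkhoff, birkhoff,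
      Finset.sum_range_succ, add_comm, hGadd]
    rfl

variable [MeasurableSpace X] [MeasurableSpace Y] {μ : Measure X} {ν : Measure Y}

lemma measurable_birkhoff (hf : Measurable f) (hτ : Measurable τ) (N : ℕ) :
    Measurable (birkhoff f τ N) :=
  Finset.measurable_sum _ fun n _ => hτ.comp (hf.iterate n)

lemma measurable_flowCorrelation {E : Type*} [MeasurableSpace E] [SFinite ν] {G : E → Y → Y}
    (hG : Measurable fun q : E × Y => G q.1 q.2) {B₁ B₂ : Y → ℝ} (hB₁ : Measurable B₁)
    (hB₂ : Measurable B₂) : Measurable (flowCorrelation ν G B₁ B₂) :=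
  ((hB₁.comp measurable_snd).mul (hB₂.comp hG)).stronglyMeasurable.integral_prod_right'.measurable

variable [IsFiniteMeasure μ] [IsFiniteMeasure ν] {A₁ A₂ : X → ℝ} {B₁ B₂ : Y → ℝ}
  {a₁ a₂ b₁ b₂ : ℝ}

lemma integral_mul_comp_skew_iterate (hf : Measurable f)
    (hG : Measurable fun q : EuclideanSpace ℝ (Fin d) × Y => G q.1 q.2) (hG0 : G 0 = id)
    (hGadd : ∀ t s, G (t + s) = G t ∘ G s) (hτ : Measurable τ) (hA₁ : Measurable A₁)
    (hA₂ : Measurable A₂) (hB₁ : Measurable B₁) (hB₂ : Measurable B₂) (ha₁ : ∀ x, |A₁ x| ≤ a₁)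
    (ha₂ : ∀ x, |A₂ x| ≤ a₂) (hb₁ : ∀ y, |B₁ y| ≤ b₁) (hb₂ : ∀ y, |B₂ y| ≤ b₂) (N : ℕ) :
    ∫ q, (A₁ q.1 * B₁ q.2) * (A₂ ((skew f G τ)^[N] q).1 * B₂ ((skew f G τ)^[N] q).2)
        ∂(μ.prod ν)
      = ∫ x, A₁ x * A₂ (f^[N] x) * flowCorrelation ν G B₁ B₂ (birkhoff f τ N x) ∂μ := by
  simp_rw [skew_iterate_apply hG0 hGadd]
  have hmeas : Measurable fun q : X × Y =>
      (A₁ q.1 * B₁ q.2) * (A₂ (f^[N] q.1) * B₂ (G (birkhoff f τ N q.1) q.2)) :=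
    ((hA₁.comp measurable_fst).mul (hB₁.comp measurable_snd)).mul
      ((hA₂.comp ((hf.iterate N).comp measurable_fst)).mul (hB₂.comp (hG.comp
        (((measurable_birkhoff hf hτ N).comp measurable_fst).prodMk measurable_snd))))
  have hint := Integrable.of_bound (μ := μ.prod ν) hmeas.aestronglyMeasurable _
    (ae_of_all _ fun q => abs_mul_le_of_abs_le (abs_mul_le_of_abs_le (ha₁ q.1) (hb₁ q.2))
      (abs_mul_le_of_abs_le (ha₂ _) (hb₂ _)))
  rw [integral_prod _ hint]
  congr with x
  rw [flowCorrelation, ← integral_const_mul]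
  congr with y
  ring

lemma abs_integral_mul_comp_skew_iterate_sub_le [IsProbabilityMeasure μ]
    [IsProbabilityMeasure ν] (hf : Measurable f)
    (hG : Measurable fun q : EuclideanSpace ℝ (Fin d) × Y => G q.1 q.2)
    (hG0 : G 0 = id) (hGadd : ∀ t s, G (t + s) = G t ∘ G s) (hτ : Measurable τ)
    (hA₁ : Measurable A₁) (hA₂ : Measurable A₂) (hB₁ : Measurable B₁) (hB₂ : Measurable B₂)
    (ha₁ : ∀ x, |A₁ x| ≤ a₁) (ha₂ : ∀ x, |A₂ x| ≤ a₂) (hb₁ : ∀ y, |B₁ y| ≤ b₁)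
    (hb₂ : ∀ y, |B₂ y| ≤ b₂) {CG δ : ℝ} (hCG : 0 ≤ CG) (hδ : 0 ≤ δ)
    (hGmix : ∀ t ≠ 0,
      |flowCorrelation ν G B₁ B₂ t - (∫ y, B₁ y ∂ν) * ∫ y, B₂ y ∂ν| ≤ CG * ‖t‖ ^ (-δ))
    {N : ℕ} (hN : 0 < N) :
    |(∫ q, (A₁ q.1 * B₁ q.2) * (A₂ ((skew f G τ)^[N] q).1 * B₂ ((skew f G τ)^[N] q).2)
          ∂(μ.prod ν))
        - (∫ q, A₁ q.1 * B₁ q.2 ∂(μ.prod ν)) * ∫ q, A₂ q.1 * B₂ q.2 ∂(μ.prod ν)|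
      ≤ a₁ * a₂ * (2 * (b₁ * b₂) * μ.real {x | ‖∫ x, τ x ∂μ‖ / 2 ≤
            ‖(N : ℝ)⁻¹ • birkhoff f τ N x - ∫ x, τ x ∂μ‖}
          + CG * (N * (‖∫ x, τ x ∂μ‖ / 2)) ^ (-δ))
        + |(∫ x, A₁ x * A₂ (f^[N] x) ∂μ) - (∫ x, A₁ x ∂μ) * ∫ x, A₂ x ∂μ| * (b₁ * b₂) := by
  set T := birkhoff f τ N
  set φ := flowCorrelation ν G B₁ B₂
  set c := (∫ y, B₁ y ∂ν) * ∫ y, B₂ y ∂ν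
  set g := fun x => A₁ x * A₂ (f^[N] x)
  have hT : Measurable T := measurable_birkhoff hf hτ N
  have hg : Measurable g := hA₁.mul (hA₂.comp (hf.iterate N))
  have hgb (x : X) : |g x| ≤ a₁ * a₂ := abs_mul_le_of_abs_le (ha₁ x) (ha₂ _)
  have hφ (t) : |φ t| ≤ b₁ * b₂ :=
    abs_integral_le_of_abs_le fun y => abs_mul_le_of_abs_le (hb₁ y) (hb₂ _)
  have hc : |c| ≤ b₁ * b₂ :=
    abs_mul_le_of_abs_le (abs_integral_le_of_abs_le hb₁) (abs_integral_le_of_abs_le hb₂)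
  have hdecomp : (∫ x, g x * φ (T x) ∂μ)
        - ((∫ x, A₁ x ∂μ) * ∫ y, B₁ y ∂ν) * ((∫ x, A₂ x ∂μ) * ∫ y, B₂ y ∂ν)
      = (∫ x, g x * (φ (T x) - c) ∂μ)
        + ((∫ x, g x ∂μ) - (∫ x, A₁ x ∂μ) * ∫ x, A₂ x ∂μ) * c := by
    have hgφ : Integrable (fun x => g x * φ (T x)) μ :=
      .of_bound (hg.mul ((measurable_flowCorrelation hG hB₁ hB₂).comp hT)).aestronglyMeasurable
        _ (ae_of_all _ fun x => abs_mul_le_of_abs_le (hgb x) (hφ _))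
    have hgc : Integrable (fun x => g x * c) μ :=
      .of_bound (hg.mul_const c).aestronglyMeasurable _
        (ae_of_all _ fun x => abs_mul_le_of_abs_le (hgb x) hc)
    simp_rw [mul_sub]
    rw [integral_sub hgφ hgc, integral_mul_const]
    ring
  have hfibre := abs_integral_mul_comp_le_of_large_deviation (μ := μ) (g := g)
    (T := T) (m := ∫ x, τ x ∂μ) (β := 2 * (b₁ * b₂)) (Nat.cast_pos.mpr hN)
    (measurableSet_le measurable_const
      ((hT.const_smul ((N : ℝ)⁻¹)).sub_const (∫ x, τ x ∂μ)).norm) hgb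
    (fun t => (abs_sub (φ t) c).trans (by linarith [hφ t])) hCG hδ hGmix
  rw [integral_mul_comp_skew_iterate hf hG hG0 hGadd hτ hA₁ hA₂ hB₁ hB₂ ha₁ ha₂ hb₁ hb₂,
    integral_prod_mul, integral_prod_mul, hdecomp]
  calc _ ≤ |∫ x, g x * (φ (T x) - c) ∂μ|
        + |(∫ x, g x ∂μ) - (∫ x, A₁ x ∂μ) * ∫ x, A₂ x ∂μ| * |c| := by
        rw [← abs_mul]; exact abs_add_le _ _
    _ ≤ _ := by gcongr

end SkewProduct

theorem stmt_2_general
    {X Y : Type*} [MeasurableSpace X] [MeasurableSpace Y]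
    (μ : Measure X) (ν : Measure Y)
    [IsProbabilityMeasure μ] [IsProbabilityMeasure ν]
    {d : ℕ}
    (f : X → X) (hf : MeasurePreserving f μ μ)
    (G : EuclideanSpace ℝ (Fin d) → Y → Y)
    (hGmeas : Measurable fun q : EuclideanSpace ℝ (Fin d) × Y => G q.1 q.2)
    (hG0 : G 0 = id)
    (hGadd : ∀ t s, G (t + s) = G t ∘ G s)
    (τ : X → EuclideanSpace ℝ (Fin d)) (hτmeas : Measurable τ)
    (C₀ δ₁ : ℝ) (hC₀ : 0 < C₀)
    -- polynomial large deviation bounds for τ at scale ‖μ(τ)‖/2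
    (hLD : ∀ N : ℕ, 1 ≤ N →
      (μ {x | ‖∫ x, τ x ∂μ‖ / 2 ≤ ‖(N : ℝ)⁻¹ • birkhoff f τ N x - ∫ x, τ x ∂μ‖}).toReal
        ≤ C₀ * (N : ℝ) ^ (-δ₁))
    (A₁ A₂ : X → ℝ) (B₁ B₂ : Y → ℝ)
    (hA₁ : Measurable A₁) (hA₂ : Measurable A₂)
    (hB₁ : Measurable B₁) (hB₂ : Measurable B₂)
    (hA₁b : ∃ M, ∀ x, |A₁ x| ≤ M) (hA₂b : ∃ M, ∀ x, |A₂ x| ≤ M)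
    (hB₁b : ∃ M, ∀ y, |B₁ y| ≤ M) (hB₂b : ∃ M, ∀ y, |B₂ y| ≤ M)
    (Cf δ₂ CG δ₃ : ℝ) (hCf : 0 < Cf) (hCG : 0 < CG) (hδ₃ : 0 < δ₃)
    -- polynomial mixing of f for A₁, A₂
    (hfmix : ∀ N : ℕ, 1 ≤ N →
      |(∫ x, A₁ x * A₂ (f^[N] x) ∂μ) - (∫ x, A₁ x ∂μ) * ∫ x, A₂ x ∂μ|
        ≤ Cf * (N : ℝ) ^ (-δ₂))
    -- polynomial mixing of G for B₁, B₂
    (hGmix : ∀ t : EuclideanSpace ℝ (Fin d), t ≠ 0 →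
      |(∫ y, B₁ y * B₂ (G t y) ∂ν) - (∫ y, B₁ y ∂ν) * ∫ y, B₂ y ∂ν|
        ≤ CG * ‖t‖ ^ (-δ₃)) :
    ∃ C' : ℝ, ∀ N : ℕ, 1 ≤ N →
      |(∫ q, (A₁ q.1 * B₁ q.2) * (A₂ ((skew f G τ)^[N] q).1 * B₂ ((skew f G τ)^[N] q).2)
          ∂(μ.prod ν))
        - (∫ q, A₁ q.1 * B₁ q.2 ∂(μ.prod ν)) * ∫ q, A₂ q.1 * B₂ q.2 ∂(μ.prod ν)|
        ≤ C' * (N : ℝ) ^ (-(min δ₁ (min δ₂ δ₃))) := by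
  obtain ⟨a₁, ha₁0, ha₁⟩ := exists_nonneg_abs_le hA₁b
  obtain ⟨a₂, ha₂0, ha₂⟩ := exists_nonneg_abs_le hA₂b
  obtain ⟨b₁, hb₁0, hb₁⟩ := exists_nonneg_abs_le hB₁b
  obtain ⟨b₂, hb₂0, hb₂⟩ := exists_nonneg_abs_le hB₂b
  set r := ‖∫ x, τ x ∂μ‖ / 2
  set δ := min δ₁ (min δ₂ δ₃)
  refine ⟨a₁ * a₂ * (2 * (b₁ * b₂) * C₀ + CG * r ^ (-δ₃)) + Cf * (b₁ * b₂), fun N hN => ?_⟩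
  have hN1 : (1 : ℝ) ≤ N := Nat.one_le_cast.mpr hN
  calc _ ≤ _ := abs_integral_mul_comp_skew_iterate_sub_le hf.measurable hGmeas hG0 hGadd hτmeas
          hA₁ hA₂ hB₁ hB₂ ha₁ ha₂ hb₁ hb₂ hCG.le hδ₃.le hGmix hN
    _ ≤ a₁ * a₂ * (2 * (b₁ * b₂) * (C₀ * (N : ℝ) ^ (-δ₁)) + CG * (r ^ (-δ₃) * (N : ℝ) ^ (-δ₃)))
          + Cf * (N : ℝ) ^ (-δ₂) * (b₁ * b₂) := by
        rw [Real.mul_rpow (Nat.cast_nonneg N) (by positivity), mul_comm ((N : ℝ) ^ _)]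
        gcongr
        exacts [hLD N hN, hfmix N hN]
    _ ≤ a₁ * a₂ * (2 * (b₁ * b₂) * (C₀ * (N : ℝ) ^ (-δ)) + CG * (r ^ (-δ₃) * (N : ℝ) ^ (-δ)))
          + Cf * (N : ℝ) ^ (-δ) * (b₁ * b₂) := by
        gcongr
        exacts [min_le_left _ _, (min_le_right _ _).trans (min_le_right _ _),
          (min_le_right _ _).trans (min_le_left _ _)]
    _ = _ := by ring

/-- Theorem 4.1(b) of the paper (with explicit rates): nonzero drift, polynomial large
deviations with rate `N^{-δ₁}`, `f` polynomially mixing with rate `N^{-δ₂}` and `G`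
polynomially mixing with rate `‖t‖^{-δ₃}` imply that the skew product `F` is polynomially
mixing with rate `N^{-min(δ₁,δ₂,δ₃)}` for product observables. -/
theorem stmt_2
    {X Y : Type*} [MeasurableSpace X] [MeasurableSpace Y]
    (μ : Measure X) (ν : Measure Y)
    [IsProbabilityMeasure μ] [IsProbabilityMeasure ν]
    {d : ℕ}
    (f : X → X) (hf : MeasurePreserving f μ μ)
    (G : EuclideanSpace ℝ (Fin d) → Y → Y)
    (hGmeas : Measurable fun q : EuclideanSpace ℝ (Fin d) × Y => G q.1 q.2)
    (hG0 : G 0 = id)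
    (hGadd : ∀ t s, G (t + s) = G t ∘ G s)
    (hGpres : ∀ t, MeasurePreserving (G t) ν ν)
    (τ : X → EuclideanSpace ℝ (Fin d)) (hτmeas : Measurable τ)
    (hτbdd : ∃ M, ∀ x, ‖τ x‖ ≤ M)
    (hdrift : (∫ x, τ x ∂μ) ≠ 0)
    (C₀ δ₁ : ℝ) (hC₀ : 0 < C₀) (hδ₁ : 0 < δ₁)
    -- polynomial large deviation bounds for τ at scale ‖μ(τ)‖/2
    (hLD : ∀ N : ℕ, 1 ≤ N →
      (μ {x | ‖∫ x, τ x ∂μ‖ / 2 ≤ ‖(N : ℝ)⁻¹ • birkhoff f τ N x - ∫ x, τ x ∂μ‖}).toReal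
        ≤ C₀ * (N : ℝ) ^ (-δ₁))
    (A₁ A₂ : X → ℝ) (B₁ B₂ : Y → ℝ)
    (hA₁ : Measurable A₁) (hA₂ : Measurable A₂)
    (hB₁ : Measurable B₁) (hB₂ : Measurable B₂)
    (hA₁b : ∃ M, ∀ x, |A₁ x| ≤ M) (hA₂b : ∃ M, ∀ x, |A₂ x| ≤ M)
    (hB₁b : ∃ M, ∀ y, |B₁ y| ≤ M) (hB₂b : ∃ M, ∀ y, |B₂ y| ≤ M)
    (Cf δ₂ CG δ₃ : ℝ) (hCf : 0 < Cf) (hδ₂ : 0 < δ₂) (hCG : 0 < CG) (hδ₃ : 0 < δ₃)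
    -- polynomial mixing of f for A₁, A₂
    (hfmix : ∀ N : ℕ, 1 ≤ N →
      |(∫ x, A₁ x * A₂ (f^[N] x) ∂μ) - (∫ x, A₁ x ∂μ) * ∫ x, A₂ x ∂μ|
        ≤ Cf * (N : ℝ) ^ (-δ₂))
    -- polynomial mixing of G for B₁, B₂
    (hGmix : ∀ t : EuclideanSpace ℝ (Fin d), t ≠ 0 →
      |(∫ y, B₁ y * B₂ (G t y) ∂ν) - (∫ y, B₁ y ∂ν) * ∫ y, B₂ y ∂ν|
        ≤ CG * ‖t‖ ^ (-δ₃)) :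
    ∃ C' : ℝ, ∀ N : ℕ, 1 ≤ N →
      |(∫ q, (A₁ q.1 * B₁ q.2) * (A₂ ((skew f G τ)^[N] q).1 * B₂ ((skew f G τ)^[N] q).2)
          ∂(μ.prod ν))
        - (∫ q, A₁ q.1 * B₁ q.2 ∂(μ.prod ν)) * ∫ q, A₂ q.1 * B₂ q.2 ∂(μ.prod ν)|
        ≤ C' * (N : ℝ) ^ (-(min δ₁ (min δ₂ δ₃))) :=
  stmt_2_general μ ν f hf G hGmeas hG0 hGadd τ hτmeas C₀ δ₁ hC₀ hLD A₁ A₂ B₁ B₂ hA₁ hA₂ hB₁ hB₂ hA₁b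
    hA₂b hB₁b hB₂b Cf δ₂ CG δ₃ hCf hCG hδ₃ hfmix hGmix
end

section
/- Let m ≥ 2 be even and let Q be a pairing of {1, …, m} (a partition into two-element atoms) different from the natural pairing Q̄ = {{1,2}, {3,4}, …, {m−1, m}}. For a tuple of integers 0 ≤ n₁ ≤ … ≤ n_m, call n_j − n_{j−1} a forward step of Q if j is not the smallest index of its atom (with n_0 = 0), and call n_{j+1} − n_j a backward step of Q if 1 ≤ j ≤ m − 1 and j is not the largest index of its atom. Then for every L > 0 there is a constant C = C(L, m) such that for every N ≥ 1, the number of tuples 0 ≤ n₁ ≤ … ≤ n_m ≤ N all of whose forward steps and all of whose backward steps are less than L is at most C N^{m/2 − 1}. -/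
/-!
A monotone tuple is determined by its steps `n j - prevVal n j`. Every atom of `Q` has exactly
one forward step, so `m / 2` steps are smaller than `L`. If `Q` is not the natural pairing,
some `j` and `j + 1` are both the smallest elements of their atoms (otherwise an induction
along `0, 1, …, m - 1` rebuilds the natural pairing), and then the backward step
`n (j + 1) - n j` is one more step of the tuple bounded by `L`. So only `m / 2 - 1` steps
range freely over `[0, N]`.
-/

open Filter
open scoped Classical

noncomputable section

/-- `Q` is a partition of `Fin m` (as a finite set of finite sets). -/
def IsPartitionFin {m : ℕ} (Q : Finset (Finset (Fin m))) : Prop :=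
  (∀ A ∈ Q, A.Nonempty) ∧ ∀ j : Fin m, ∃! A, A ∈ Q ∧ j ∈ A

/-- A pairing is a partition all of whose atoms have exactly two elements. -/
def IsPairing {m : ℕ} (Q : Finset (Finset (Fin m))) : Prop :=
  IsPartitionFin Q ∧ ∀ A ∈ Q, A.card = 2

/-- The natural pairing `{{1,2},{3,4},…,{m−1,m}}` (in 0-based indexing, the atoms are
`{2k, 2k+1}`). -/
def naturalPairing (m : ℕ) : Finset (Finset (Fin m)) :=
  (Finset.range (m / 2)).image fun k => Finset.univ.filter fun x : Fin m => x.val / 2 = k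

/-- `j` is not the smallest element of its atom of `Q` (so `n_j − n_{j−1}` is a forward
step). -/
def ForwardFixedFin {m : ℕ} (Q : Finset (Finset (Fin m))) (j : Fin m) : Prop :=
  ∃ A ∈ Q, j ∈ A ∧ ∃ i ∈ A, i < j

/-- `j` is not the largest element of its atom of `Q` (so `n_{j+1} − n_j` is a backward
step). -/
def BackwardFixedFin {m : ℕ} (Q : Finset (Finset (Fin m))) (j : Fin m) : Prop :=
  ∃ A ∈ Q, j ∈ A ∧ ∃ i ∈ A, j < i

/-- The value `n_{j-1}`, with the convention `n_0 = 0` before the first index. -/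
def prevVal {m : ℕ} (n : Fin m → ℕ) (j : Fin m) : ℕ :=
  if j.val = 0 then 0
  else n ⟨j.val - 1, lt_of_le_of_lt (Nat.sub_le _ _) j.isLt⟩

namespace IsPairing

variable {m : ℕ} {Q : Finset (Finset (Fin m))}

theorem exists_partner (hQ : IsPairing Q) (j : Fin m) :
    ∃ i, i ≠ j ∧ {i, j} ∈ Q ∧ ∀ A ∈ Q, j ∈ A → A = {i, j} := by
  obtain ⟨A, ⟨hAQ, hjA⟩, huniq⟩ := hQ.1.2 j
  obtain ⟨a, b, hab, rfl⟩ := Finset.card_eq_two.1 (hQ.2 A hAQ)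
  have hatom : ∀ A ∈ Q, j ∈ A → A = {a, b} := fun A h1 h2 => huniq A ⟨h1, h2⟩
  rcases Finset.mem_insert.1 hjA with rfl | hjb
  · rw [Finset.pair_comm] at hAQ hatom
    exact ⟨b, hab.symm, hAQ, hatom⟩
  · obtain rfl := Finset.mem_singleton.1 hjb
    exact ⟨a, hab, hAQ, hatom⟩

def partner (hQ : IsPairing Q) (j : Fin m) : Fin m :=
  (hQ.exists_partner j).choose

theorem partner_ne (hQ : IsPairing Q) (j : Fin m) : hQ.partner j ≠ j :=
  (hQ.exists_partner j).choose_spec.1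

theorem pair_partner_mem (hQ : IsPairing Q) (j : Fin m) : {hQ.partner j, j} ∈ Q :=
  (hQ.exists_partner j).choose_spec.2.1

theorem eq_pair_partner (hQ : IsPairing Q) {A : Finset (Fin m)} {j : Fin m} (hA : A ∈ Q)
    (hj : j ∈ A) :
    A = {hQ.partner j, j} :=
  (hQ.exists_partner j).choose_spec.2.2 A hA hj

theorem partner_partner (hQ : IsPairing Q) (j : Fin m) : hQ.partner (hQ.partner j) = j := by
  have hpair := hQ.eq_pair_partner (hQ.pair_partner_mem j) (Finset.mem_insert_self _ _)
  have hj : j ∈ ({hQ.partner (hQ.partner j), hQ.partner j} : Finset (Fin m)) := by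
    rw [← hpair]; simp
  rcases Finset.mem_insert.1 hj with h | h
  · exact h.symm
  · exact absurd (Finset.mem_singleton.1 h).symm (hQ.partner_ne j)

theorem exists_mem_atom_iff (hQ : IsPairing Q) (R : Fin m → Fin m → Prop) (hR : ∀ j, ¬ R j j)
    (j : Fin m) :
    (∃ A ∈ Q, j ∈ A ∧ ∃ i ∈ A, R i j) ↔ R (hQ.partner j) j := by
  constructor
  · rintro ⟨A, hA, hjA, i, hiA, hij⟩
    rw [hQ.eq_pair_partner hA hjA, Finset.mem_insert, Finset.mem_singleton] at hiA
    rcases hiA with rfl | rfl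
    · exact hij
    · exact absurd hij (hR i)
  · exact fun h => ⟨_, hQ.pair_partner_mem j, by simp, _, by simp, h⟩

theorem forwardFixedFin_iff (hQ : IsPairing Q) (j : Fin m) :
    ForwardFixedFin Q j ↔ hQ.partner j < j :=
  hQ.exists_mem_atom_iff (· < ·) (fun j => lt_irrefl j) j

theorem backwardFixedFin_iff (hQ : IsPairing Q) (j : Fin m) :
    BackwardFixedFin Q j ↔ j < hQ.partner j :=
  hQ.exists_mem_atom_iff (fun i j => j < i) (fun j => lt_irrefl j) j

theorem not_forwardFixedFin_iff (hQ : IsPairing Q) (j : Fin m) :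
    ¬ ForwardFixedFin Q j ↔ j < hQ.partner j := by
  rw [hQ.forwardFixedFin_iff, not_lt]
  exact ⟨fun h => lt_of_le_of_ne h (hQ.partner_ne j).symm, le_of_lt⟩

/-- `partner` swaps the largest and the smallest elements of the atoms. -/
theorem two_mul_card_forwardFixedFin (hQ : IsPairing Q) :
    2 * (Finset.univ.filter (ForwardFixedFin Q)).card = m := by
  have hswap : (Finset.univ.filter (ForwardFixedFin Q)).card =
      (Finset.univ.filter fun j => ¬ ForwardFixedFin Q j).card := by
    refine Finset.card_nbij' hQ.partner hQ.partner (fun j hj => ?_) (fun j hj => ?_)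
      (fun j _ => hQ.partner_partner j) (fun j _ => hQ.partner_partner j)
    · simp only [Finset.coe_filter, Finset.mem_univ, true_and, Set.mem_ofPred_eq] at hj ⊢
      rwa [hQ.not_forwardFixedFin_iff, hQ.partner_partner, ← hQ.forwardFixedFin_iff]
    · simp only [Finset.coe_filter, Finset.mem_univ, true_and, Set.mem_ofPred_eq] at hj ⊢
      rwa [hQ.forwardFixedFin_iff, hQ.partner_partner, ← hQ.not_forwardFixedFin_iff]
  have htotal := Finset.card_filter_add_card_filter_not (s := Finset.univ) (ForwardFixedFin Q)
  rw [Finset.card_univ, Fintype.card_fin] at htotal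
  omega

theorem partner_div_two (hQ : IsPairing Q) (H : ∀ j : Fin m, ∀ h : j.val + 1 < m,
      BackwardFixedFin Q j → ForwardFixedFin Q ⟨j.val + 1, h⟩)
    (j : Fin m) : (hQ.partner j).val / 2 = j.val / 2 := by
  suffices ∀ k, ∀ i : Fin m, i.val < 2 * k → (hQ.partner i).val / 2 = i.val / 2 from
    this (j.val / 2 + 1) j (by omega)
  intro k
  induction k with
  | zero => intro i hi; omega
  | succ k ih =>
    have hclosed : ∀ i : Fin m, 2 * k ≤ i.val → 2 * k ≤ (hQ.partner i).val := by
      intro i hi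
      by_contra hlt
      have := ih (hQ.partner i) (by omega)
      rw [hQ.partner_partner] at this
      omega
    intro i hi
    rcases lt_or_ge i.val (2 * k) with hlt | hge
    · exact ih i hlt
    obtain ⟨a, ha⟩ : ∃ a : Fin m, a.val = 2 * k := ⟨⟨2 * k, by omega⟩, rfl⟩
    have hopen : a < hQ.partner a := by
      have := hclosed a ha.ge
      have := Fin.val_ne_of_ne (hQ.partner_ne a)
      rw [Fin.lt_def]; omega
    have hsucc : a.val + 1 < m := by
      have := (hQ.partner a).isLt
      rw [Fin.lt_def] at hopen; omega
    obtain ⟨b, hb⟩ : ∃ b : Fin m, b.val = a.val + 1 := ⟨⟨a.val + 1, hsucc⟩, rfl⟩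
    have hclose : hQ.partner b < b := by
      have := H a hsucc ((hQ.backwardFixedFin_iff a).2 hopen)
      rwa [show (⟨a.val + 1, hsucc⟩ : Fin m) = b from Fin.ext hb.symm,
        hQ.forwardFixedFin_iff] at this
    have hba : hQ.partner b = a := by
      have := hclosed b (by omega)
      rw [Fin.lt_def] at hclose
      exact Fin.ext (by omega)
    have hab : hQ.partner a = b := by rw [← hba, hQ.partner_partner]
    rcases (by omega : i.val = a.val ∨ i.val = b.val) with hi | hi
    · rw [Fin.ext hi, hab]; omega
    · rw [Fin.ext hi, hba]; omega

theorem pair_partner_eq_filter (hQ : IsPairing Q) (H : ∀ j : Fin m, ∀ h : j.val + 1 < m,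
      BackwardFixedFin Q j → ForwardFixedFin Q ⟨j.val + 1, h⟩)
    (j : Fin m) :
    {hQ.partner j, j} = Finset.univ.filter fun x : Fin m => x.val / 2 = j.val / 2 := by
  have hdiv := hQ.partner_div_two H j
  have hne := Fin.val_ne_of_ne (hQ.partner_ne j)
  ext x
  simp only [Finset.mem_insert, Finset.mem_singleton, Finset.mem_filter, Finset.mem_univ,
    true_and, Fin.ext_iff]
  omega

theorem eq_naturalPairing (hQ : IsPairing Q) (H : ∀ j : Fin m, ∀ h : j.val + 1 < m,
      BackwardFixedFin Q j → ForwardFixedFin Q ⟨j.val + 1, h⟩) :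
    Q = naturalPairing m := by
  ext A
  simp only [naturalPairing, Finset.mem_image, Finset.mem_range]
  constructor
  · intro hA
    obtain ⟨j, hj⟩ := hQ.1.1 A hA
    refine ⟨j.val / 2, ?_, by rw [hQ.eq_pair_partner hA hj, hQ.pair_partner_eq_filter H]⟩
    have := hQ.partner_div_two H j
    have := Fin.val_ne_of_ne (hQ.partner_ne j)
    have := (hQ.partner j).isLt
    omega
  · rintro ⟨k, hk, rfl⟩
    have hpair := hQ.pair_partner_eq_filter H ⟨2 * k, by omega⟩
    simp only [Nat.mul_div_cancel_left k two_pos] at hpair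
    exact hpair ▸ hQ.pair_partner_mem _

theorem exists_backwardFixedFin_not_forwardFixedFin_succ (hQ : IsPairing Q)
    (hQne : Q ≠ naturalPairing m) :
    ∃ j : Fin m, ∃ h : j.val + 1 < m,
      BackwardFixedFin Q j ∧ ¬ ForwardFixedFin Q ⟨j.val + 1, h⟩ := by
  by_contra hcon
  push Not at hcon
  exact hQne (hQ.eq_naturalPairing hcon)

end IsPairing

section Steps

variable {m : ℕ}

theorem prevVal_succ (n : Fin m → ℕ) (k : ℕ) (h : k + 1 < m) :
    prevVal n ⟨k + 1, h⟩ = n ⟨k, by omega⟩ := by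
  simp [prevVal]

theorem prevVal_le {n : Fin m → ℕ} (hn : Monotone n) (j : Fin m) : prevVal n j ≤ n j := by
  unfold prevVal
  split
  · exact Nat.zero_le _
  · exact hn (Fin.mk_le_of_le_val (Nat.sub_le _ _))

theorem eq_of_forall_sub_prevVal_eq {n n' : Fin m → ℕ} (hn : Monotone n) (hn' : Monotone n')
    (h : ∀ j, n j - prevVal n j = n' j - prevVal n' j) : n = n' := by
  suffices ∀ k (hk : k < m), n ⟨k, hk⟩ = n' ⟨k, hk⟩ from funext fun j => this j.val j.isLt
  intro k
  induction k with
  | zero =>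
    intro hk
    simpa [prevVal] using h ⟨0, hk⟩
  | succ k ih =>
    intro hk
    have hstep := h ⟨k + 1, hk⟩
    have hle := prevVal_le hn ⟨k + 1, hk⟩
    have hle' := prevVal_le hn' ⟨k + 1, hk⟩
    simp only [prevVal_succ] at hstep hle hle'
    have := ih (by omega)
    omega

theorem card_le_of_sub_prevVal_lt (N K : ℕ) (T : Finset (Fin m)) (S : Finset (Fin m → ℕ))
    (hS : ∀ n ∈ S, Monotone n ∧ (∀ j, n j ≤ N) ∧ ∀ j ∈ T, n j - prevVal n j < K) :
    S.card ≤ K ^ T.card * (N + 1) ^ (m - T.card) := by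
  let B := Fintype.piFinset fun j : Fin m => Finset.range (if j ∈ T then K else N + 1)
  have hmaps : Set.MapsTo (fun n j => n j - prevVal n j) (S : Set (Fin m → ℕ))
      (B : Set (Fin m → ℕ)) := by
    intro n hn
    obtain ⟨-, hbox, hT⟩ := hS n hn
    simp only [B, Finset.mem_coe, Fintype.mem_piFinset, Finset.mem_range]
    intro j
    split_ifs with hj
    · exact hT j hj
    · have := hbox j; omega
  have hinj : Set.InjOn (fun n j => n j - prevVal n j) (S : Set (Fin m → ℕ)) :=
    fun n hn n' hn' h => eq_of_forall_sub_prevVal_eq (hS n hn).1 (hS n' hn').1 (congrFun h)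
  calc S.card ≤ B.card := Finset.card_le_card_of_injOn _ hmaps hinj
    _ = K ^ T.card * (N + 1) ^ (m - T.card) := by
      simp only [B, Fintype.card_piFinset, Finset.card_range, Finset.prod_ite,
        Finset.prod_const, Finset.filter_mem_eq_inter, Finset.univ_inter]
      rw [Finset.filter_notMem_eq_sdiff, Finset.card_univ_sdiff, Fintype.card_fin]

end Steps

theorem stmt_12_general
    (m : ℕ)
    (Q : Finset (Finset (Fin m))) (hQ : IsPairing Q) (hQne : Q ≠ naturalPairing m)
    (L : ℝ) :
    ∃ C : ℝ, ∀ N : ℕ, 1 ≤ N →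
      (((Fintype.piFinset fun _ : Fin m => Finset.range (N + 1)).filter
          (fun n : Fin m → ℕ =>
            (∀ i j : Fin m, i ≤ j → n i ≤ n j) ∧
            (∀ j : Fin m, ForwardFixedFin Q j → ((n j - prevVal n j : ℕ) : ℝ) < L) ∧
            (∀ j : Fin m, ∀ h : j.val + 1 < m, BackwardFixedFin Q j →
              ((n ⟨j.val + 1, h⟩ - n j : ℕ) : ℝ) < L))).card : ℝ)
        ≤ C * (N : ℝ) ^ (m / 2 - 1) := by
  obtain ⟨j, hj, hback, hopen⟩ := hQ.exists_backwardFixedFin_not_forwardFixedFin_succ hQne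
  set T := insert ⟨j.val + 1, hj⟩ (Finset.univ.filter (ForwardFixedFin Q))
  have hhalf := hQ.two_mul_card_forwardFixedFin
  have hT : T.card = m / 2 + 1 := by
    rw [Finset.card_insert_of_notMem (by simpa using hopen)]
    omega
  refine ⟨⌈L⌉₊ ^ (m / 2 + 1) * 2 ^ (m / 2 - 1), fun N hN =>
    (Nat.cast_le.2 (card_le_of_sub_prevVal_lt N ⌈L⌉₊ T _ fun n hn => ?_)).trans ?_⟩
  · simp only [Finset.mem_filter, Fintype.mem_piFinset, Finset.mem_range] at hn
    obtain ⟨hbox, hmono, hfwd, hbwd⟩ := hn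
    refine ⟨hmono, fun i => Nat.lt_succ_iff.1 (hbox i), fun i hi => ?_⟩
    rcases Finset.mem_insert.1 hi with rfl | hi
    · rw [prevVal_succ]
      exact Nat.lt_ceil.2 (hbwd j hj hback)
    · exact Nat.lt_ceil.2 (hfwd i (by simpa using hi))
  rw [hT, show m - (m / 2 + 1) = m / 2 - 1 by omega]
  calc ((⌈L⌉₊ ^ (m / 2 + 1) * (N + 1) ^ (m / 2 - 1) : ℕ) : ℝ)
      ≤ ⌈L⌉₊ ^ (m / 2 + 1) * (2 * N) ^ (m / 2 - 1) := by
        push_cast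
        gcongr
        have : (1 : ℝ) ≤ N := by exact_mod_cast hN
        linarith
    _ = _ := by ring

/-- Lemma 5.5 of the paper: if `Q` is a pairing different from the natural pairing, the
number of monotone tuples `0 ≤ n₁ ≤ … ≤ n_m ≤ N` all of whose forward and backward steps
are less than `L` is `O(N^{m/2 − 1})` (the constant depending on `L` and `m`). -/
theorem stmt_12
    (m : ℕ) (hm : 2 ≤ m) (hmeven : Even m)
    (Q : Finset (Finset (Fin m))) (hQ : IsPairing Q) (hQne : Q ≠ naturalPairing m)
    (L : ℝ) (hL : 0 < L) :
    ∃ C : ℝ, ∀ N : ℕ, 1 ≤ N →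
      (((Fintype.piFinset fun _ : Fin m => Finset.range (N + 1)).filter
          (fun n : Fin m → ℕ =>
            (∀ i j : Fin m, i ≤ j → n i ≤ n j) ∧
            (∀ j : Fin m, ForwardFixedFin Q j → ((n j - prevVal n j : ℕ) : ℝ) < L) ∧
            (∀ j : Fin m, ∀ h : j.val + 1 < m, BackwardFixedFin Q j →
              ((n ⟨j.val + 1, h⟩ - n j : ℕ) : ℝ) < L))).card : ℝ)
        ≤ C * (N : ℝ) ^ (m / 2 - 1) :=
  stmt_12_general m Q hQ hQne L
end
end
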